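/- arXiv:2507.05877 — 5 statements merged into one kernel-verified Lean document; each statement's English description precedes it below -/
import Mathlib

section
/- Let c be a positive integer and let i be an integer with −c ≤ i ≤ c−1. Then lim_{a→∞} Pr[X_{2a} − a = i | X_{2a} − a ∈ {−c, −c+1, …, c−1}] = 1/(2c). -/
/-!
Near the centre the binomial coefficients are asymptotically flat: consecutive ratios
`C(2a, a+k+1) / C(2a, a+k) = (a - k) / (a + k + 1)` tend to `1`, so for every fixed `i` we get
`C(2a, a+i) / C(2a, a) → 1`. Hence the `2c` terms of the conditional probability become
asymptotically equal, and each tends to `1/(2c)`.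
-/

open Filter Finset

namespace Nat

lemma cast_choose_two_mul_add_succ {a k : ℕ} (hk : k ≤ a) :
    ((2 * a).choose (a + (k + 1)) : ℝ) =
      (2 * a).choose (a + k) * (((a : ℝ) - k) / ((a : ℝ) + k + 1)) := by
  have hrec : ((2 * a).choose (a + k + 1) : ℝ) * ((a + k : ℕ) + 1) =
      (2 * a).choose (a + k) * ((2 * a - (a + k) : ℕ) : ℝ) := by
    exact_mod_cast choose_succ_right_eq (2 * a) (a + k)
  rw [show 2 * a - (a + k) = a - k by omega, cast_sub hk] at hrec
  push_cast at hrec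
  rw [← add_assoc, mul_div_assoc', eq_div_iff (by positivity), hrec]

lemma tendsto_choose_two_mul_add_div_centralBinom (k : ℕ) :
    Tendsto (fun a : ℕ => ((2 * a).choose (a + k) : ℝ) / (2 * a).choose a) atTop (nhds 1) := by
  induction k with
  | zero =>
    refine tendsto_const_nhds.congr fun a => ?_
    rw [add_zero, div_self (by exact_mod_cast (choose_pos (by omega)).ne')]
  | succ k ih =>
    have hstep : Tendsto (fun a : ℕ => ((a : ℝ) - k) / ((a : ℝ) + k + 1)) atTop (nhds 1) := by
      convert tendsto_add_mul_div_add_mul_atTop_nhds (-(k : ℝ)) ((k : ℝ) + 1) 1 one_ne_zero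
        using 2 <;> ring
    refine (mul_one (1 : ℝ) ▸ ih.mul hstep).congr' ?_
    filter_upwards [eventually_ge_atTop k] with a hk
    rw [cast_choose_two_mul_add_succ hk, mul_div_right_comm]

lemma tendsto_choose_two_mul_toNat_add_div_centralBinom (i : ℤ) :
    Tendsto (fun a : ℕ => ((2 * a).choose ((a : ℤ) + i).toNat : ℝ) / (2 * a).choose a)
      atTop (nhds 1) := by
  refine (tendsto_choose_two_mul_add_div_centralBinom i.natAbs).congr' ?_
  filter_upwards [eventually_ge_atTop i.natAbs] with a ha
  rcases le_or_gt 0 i with hi | hi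
  · rw [show ((a : ℤ) + i).toNat = a + i.natAbs by omega]
  · rw [show ((a : ℤ) + i).toNat = 2 * a - (a + i.natAbs) by omega, choose_symm (by omega)]

end Nat

theorem stmt_0_general (c : ℕ) (hc : 0 < c) (i : ℤ) :
    Tendsto (fun a : ℕ =>
        ((Nat.choose (2 * a) ((a : ℤ) + i).toNat : ℝ) / (2 : ℝ) ^ (2 * a)) /
          (∑ j ∈ Finset.Icc (-(c : ℤ)) ((c : ℤ) - 1),
            (Nat.choose (2 * a) ((a : ℤ) + j).toNat : ℝ) / (2 : ℝ) ^ (2 * a)))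
      atTop (nhds (1 / (2 * (c : ℝ)))) := by
  have hcard : ((Icc (-(c : ℤ)) ((c : ℤ) - 1)).card : ℝ) = 2 * c := by
    rw [Int.card_Icc, show ((c : ℤ) - 1 + 1 - -(c : ℤ)).toNat = 2 * c by omega]
    push_cast; rfl
  have hsum : Tendsto (fun a : ℕ => ∑ j ∈ Icc (-(c : ℤ)) ((c : ℤ) - 1),
      ((2 * a).choose ((a : ℤ) + j).toNat : ℝ) / (2 * a).choose a) atTop (nhds (2 * c)) := by
    have := tendsto_finsetSum (Icc (-(c : ℤ)) ((c : ℤ) - 1))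
      fun j _ => Nat.tendsto_choose_two_mul_toNat_add_div_centralBinom j
    rwa [sum_const, nsmul_one, hcard] at this
  refine ((Nat.tendsto_choose_two_mul_toNat_add_div_centralBinom i).div hsum
    (by positivity)).congr fun a => ?_
  have hcentral : ((2 * a).choose a : ℝ) ≠ 0 := by
    exact_mod_cast (Nat.choose_pos (by omega)).ne'
  simp only [Pi.div_apply, ← sum_div]
  rw [div_div_div_cancel_right₀ hcentral, div_div_div_cancel_right₀ (by positivity)]

/-- For a positive integer `c` and an integer `i` with `-c ≤ i ≤ c-1`,
the conditional probability `Pr[X_{2a} - a = i ∣ X_{2a} - a ∈ [-c, c-1]]` tends to `1/(2c)`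
as `a → ∞`, where `X_{2a}` is binomial with `2a` trials and success probability `1/2`,
i.e. `Pr[X_{2a} = h] = C(2a, h) · 2^{-2a}`. -/
theorem stmt_0 (c : ℕ) (hc : 0 < c) (i : ℤ) (hi₁ : -(c : ℤ) ≤ i) (hi₂ : i ≤ (c : ℤ) - 1) :
    Tendsto (fun a : ℕ =>
        ((Nat.choose (2 * a) ((a : ℤ) + i).toNat : ℝ) / (2 : ℝ) ^ (2 * a)) /
          (∑ j ∈ Finset.Icc (-(c : ℤ)) ((c : ℤ) - 1),
            (Nat.choose (2 * a) ((a : ℤ) + j).toNat : ℝ) / (2 : ℝ) ^ (2 * a)))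
      atTop (nhds (1 / (2 * (c : ℝ)))) :=
  stmt_0_general c hc i
end

section
/- Let V*, V ⊆ [n] with |V| ≥ |V*|. Then V ⪰ V* if and only if there exist an injection ℓ : V* → V with ℓ(v) ≤ v for all v ∈ V* and an injection r : V* → V with r(v) ≥ v for all v ∈ V*. Moreover, left dominance alone is equivalent to the existence of such an injection ℓ, and right dominance alone is equivalent to the existence of such an injection r. -/
/-!
Lowering injections `ℓ : V* → V` are exactly the matchings in the bipartite graph joining `v ∈ V*`
to the elements of `V` below `v`. The neighbourhood of a set `S ⊆ V*` is everything in `V` below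
`max S`, so Hall's condition reduces to left dominance at the thresholds `max S`. Right dominance
is left dominance for the reversed order.
-/

open Finset

namespace Finset

variable {α : Type*} [LinearOrder α]

theorem card_filter_le_of_injOn_le {V Vs : Finset α} {l : α → α}
    (hinj : Set.InjOn l Vs) (hl : ∀ v ∈ Vs, l v ∈ V ∧ l v ≤ v) (a : α) :
    #(Vs.filter (· ≤ a)) ≤ #(V.filter (· ≤ a)) := by
  refine card_le_card_of_injOn l (fun x hx => ?_) (hinj.mono fun x hx => (mem_filter.mp hx).1)
  obtain ⟨hxVs, hxa⟩ := mem_filter.mp hx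
  exact mem_filter.mpr ⟨(hl x hxVs).1, (hl x hxVs).2.trans hxa⟩

theorem exists_injOn_le_of_card_filter_le {V Vs : Finset α}
    (hdom : ∀ a, #(Vs.filter (· ≤ a)) ≤ #(V.filter (· ≤ a))) :
    ∃ l : α → α, Set.InjOn l Vs ∧ ∀ v ∈ Vs, l v ∈ V ∧ l v ≤ v := by
  classical
  let below : Vs → Finset α := fun v => V.filter (· ≤ v.1)
  have hall : ∀ s : Finset Vs, #s ≤ #(s.biUnion below) := by
    intro s
    rcases s.eq_empty_or_nonempty with rfl | hs
    · simp
    have hmax := s.max'_mem hs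
    calc #s ≤ #(Vs.filter (· ≤ (s.max' hs).1)) :=
          card_le_card_of_injOn Subtype.val
            (fun v hv => mem_filter.mpr ⟨v.2, s.le_max' v hv⟩) Subtype.val_injective.injOn
      _ ≤ #(below (s.max' hs)) := hdom _
      _ ≤ #(s.biUnion below) := card_le_card (subset_biUnion_of_mem below hmax)
  obtain ⟨f, hinj, hf⟩ := (all_card_le_biUnion_card_iff_exists_injective below).mp hall
  refine ⟨fun x => if h : x ∈ Vs then f ⟨x, h⟩ else x, fun a ha b hb hab => ?_, fun v hv => ?_⟩
  · simp only [mem_coe] at ha hb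
    simp only [dif_pos ha, dif_pos hb] at hab
    exact congrArg Subtype.val (hinj hab)
  · simpa only [dif_pos hv, below, mem_filter] using hf ⟨v, hv⟩

theorem exists_injOn_le_iff_card_filter_le (V Vs : Finset α) :
    (∃ l : α → α, Set.InjOn l Vs ∧ ∀ v ∈ Vs, l v ∈ V ∧ l v ≤ v) ↔
      ∀ a, #(Vs.filter (· ≤ a)) ≤ #(V.filter (· ≤ a)) :=
  ⟨fun ⟨_, hinj, hl⟩ => card_filter_le_of_injOn_le hinj hl, exists_injOn_le_of_card_filter_le⟩

theorem exists_injOn_ge_iff_card_filter_ge (V Vs : Finset α) :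
    (∃ r : α → α, Set.InjOn r Vs ∧ ∀ v ∈ Vs, r v ∈ V ∧ v ≤ r v) ↔
      ∀ a, #(Vs.filter (a ≤ ·)) ≤ #(V.filter (a ≤ ·)) :=
  exists_injOn_le_iff_card_filter_le (α := αᵒᵈ) V Vs

end Finset

theorem Fin.forall_mem_Icc_one_iff {n : ℕ} {P : ℕ → Prop} :
    (∀ h ∈ Icc 1 n, P h) ↔ ∀ a : Fin n, P (a + 1) := by
  refine ⟨fun hP a => hP _ (mem_Icc.mpr ⟨by omega, a.isLt⟩), fun hP h hh => ?_⟩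
  obtain ⟨h1, hn⟩ := mem_Icc.mp hh
  simpa [Nat.sub_add_cancel h1] using hP ⟨h - 1, by omega⟩

theorem Fin.forall_mem_Icc_one_sub_iff {n : ℕ} {P : ℕ → Prop} :
    (∀ h ∈ Icc 1 n, P (n - h)) ↔ ∀ a : Fin n, P a := by
  refine ⟨fun hP a => ?_, fun hP h hh => hP ⟨n - h, by grind⟩⟩
  simpa [Nat.sub_sub_self a.isLt.le] using hP (n - a) (mem_Icc.mpr ⟨by omega, by omega⟩)

theorem Fin.forall_mem_Icc_card_filter_lt_iff {n : ℕ} (V Vs : Finset (Fin n)) :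
    (∀ h ∈ Icc 1 n,
        #(Vs.filter fun i : Fin n => (i : ℕ) < h) ≤ #(V.filter fun i : Fin n => (i : ℕ) < h)) ↔
      ∀ a, #(Vs.filter (· ≤ a)) ≤ #(V.filter (· ≤ a)) := by
  simp only [Fin.forall_mem_Icc_one_iff, Nat.lt_add_one_iff, Fin.le_def]

theorem Fin.forall_mem_Icc_card_filter_sub_le_iff {n : ℕ} (V Vs : Finset (Fin n)) :
    (∀ h ∈ Icc 1 n,
        #(Vs.filter fun i : Fin n => n - h ≤ (i : ℕ)) ≤ #(V.filter fun i : Fin n => n - h ≤ (i : ℕ))) ↔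
      ∀ a, #(Vs.filter (a ≤ ·)) ≤ #(V.filter (a ≤ ·)) := by
  simp only [Fin.forall_mem_Icc_one_sub_iff (P := fun m =>
    #(Vs.filter fun i : Fin n => m ≤ (i : ℕ)) ≤ #(V.filter fun i : Fin n => m ≤ (i : ℕ))), Fin.le_def]

theorem stmt_6_general (n : ℕ) (V Vs : Finset (Fin n)) :
    ((∀ h ∈ Finset.Icc 1 n,
        (Vs.filter fun i : Fin n => (i : ℕ) < h).card ≤ (V.filter fun i : Fin n => (i : ℕ) < h).card) ↔
      ∃ l : Fin n → Fin n, Set.InjOn l (Vs : Set (Fin n)) ∧ ∀ v ∈ Vs, l v ∈ V ∧ l v ≤ v) ∧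
    ((∀ h ∈ Finset.Icc 1 n,
        (Vs.filter fun i : Fin n => n - h ≤ (i : ℕ)).card ≤
          (V.filter fun i : Fin n => n - h ≤ (i : ℕ)).card) ↔
      ∃ r : Fin n → Fin n, Set.InjOn r (Vs : Set (Fin n)) ∧ ∀ v ∈ Vs, r v ∈ V ∧ v ≤ r v) ∧
    ((∀ h ∈ Finset.Icc 1 n,
        (Vs.filter fun i : Fin n => (i : ℕ) < h).card ≤ (V.filter fun i : Fin n => (i : ℕ) < h).card ∧
        (Vs.filter fun i : Fin n => n - h ≤ (i : ℕ)).card ≤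
          (V.filter fun i : Fin n => n - h ≤ (i : ℕ)).card) ↔
      ((∃ l : Fin n → Fin n, Set.InjOn l (Vs : Set (Fin n)) ∧ ∀ v ∈ Vs, l v ∈ V ∧ l v ≤ v) ∧
       (∃ r : Fin n → Fin n, Set.InjOn r (Vs : Set (Fin n)) ∧
          ∀ v ∈ Vs, r v ∈ V ∧ v ≤ r v))) := by
  have hleft := (Fin.forall_mem_Icc_card_filter_lt_iff V Vs).trans
    (exists_injOn_le_iff_card_filter_le V Vs).symm
  have hright := (Fin.forall_mem_Icc_card_filter_sub_le_iff V Vs).trans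
    (exists_injOn_ge_iff_card_filter_ge V Vs).symm
  exact ⟨hleft, hright, forall₂_and.trans (and_congr hleft hright)⟩

/-- Let `V*, V ⊆ [n]` with `|V| ≥ |V*|` (elements of `[n] = {1,…,n}` are
represented by `Fin n`, so `[h]` corresponds to `{i : (i:ℕ) < h}` and `[−h]` to
`{i : n − h ≤ (i:ℕ)}`). Then left dominance holds iff there is an injection
`ℓ : V* → V` with `ℓ(v) ≤ v`, right dominance holds iff there is an injection `r : V* → V`
with `r(v) ≥ v`, and `V ⪰ V*` iff both such injections exist. -/
theorem stmt_6 (n : ℕ) (V Vs : Finset (Fin n)) (hcard : Vs.card ≤ V.card) :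
    ((∀ h ∈ Finset.Icc 1 n,
        (Vs.filter fun i : Fin n => (i : ℕ) < h).card ≤ (V.filter fun i : Fin n => (i : ℕ) < h).card) ↔
      ∃ l : Fin n → Fin n, Set.InjOn l (Vs : Set (Fin n)) ∧ ∀ v ∈ Vs, l v ∈ V ∧ l v ≤ v) ∧
    ((∀ h ∈ Finset.Icc 1 n,
        (Vs.filter fun i : Fin n => n - h ≤ (i : ℕ)).card ≤
          (V.filter fun i : Fin n => n - h ≤ (i : ℕ)).card) ↔
      ∃ r : Fin n → Fin n, Set.InjOn r (Vs : Set (Fin n)) ∧ ∀ v ∈ Vs, r v ∈ V ∧ v ≤ r v) ∧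
    ((∀ h ∈ Finset.Icc 1 n,
        (Vs.filter fun i : Fin n => (i : ℕ) < h).card ≤ (V.filter fun i : Fin n => (i : ℕ) < h).card ∧
        (Vs.filter fun i : Fin n => n - h ≤ (i : ℕ)).card ≤
          (V.filter fun i : Fin n => n - h ≤ (i : ℕ)).card) ↔
      ((∃ l : Fin n → Fin n, Set.InjOn l (Vs : Set (Fin n)) ∧ ∀ v ∈ Vs, l v ∈ V ∧ l v ≤ v) ∧
       (∃ r : Fin n → Fin n, Set.InjOn r (Vs : Set (Fin n)) ∧
          ∀ v ∈ Vs, r v ∈ V ∧ v ≤ r v))) :=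
  stmt_6_general n V Vs
end

section
/- Let p ∈ (0,1)^n with p_1 ≤ p_2 ≤ … ≤ p_n and let x_1,…,x_n be independent Boolean random variables with Pr[x_i = 1] = p_i. Let V, V* ⊆ [n] with V ⪰ V*. Then for every ℓ ∈ [|V*|]: Pr[Σ_{i∈V} x_i ≥ ℓ] ≥ Pr[Σ_{i∈V*} x_i ≥ ℓ] and Pr[Σ_{i∈V} (1−x_i) ≥ ℓ] ≥ Pr[Σ_{i∈V*} (1−x_i) ≥ ℓ]. -/
/-!
Write `tailPr q S ℓ` for the probability that at least `ℓ` of the `x i`, `i ∈ S`, are `true`.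
Conditioning on a coordinate `a ∉ S` gives
`tailPr q (insert a S) (ℓ + 1) = q a * tailPr q S ℓ + (1 - q a) * tailPr q S (ℓ + 1)`,
and by induction on `S` this recursion shows that the tail probability can only grow when `S` is
mapped injectively into `T` by a map `f` with `q i ≤ q (f i)`. Right dominance is Hall's condition
for an injection `f : Vs → V` with `i ≤ f i`, left dominance for one with `f i ≤ i`. As `p` is
monotone, the first gives the claim for the `x i`; the second gives it for the `1 - x i`, because
negating every coordinate turns the product measure of `p` into that of `1 - p`.
-/

open Finset

open Classical in
/-- `Pr[P]` with respect to the product measure on `{0,1}^n` where `Pr[x_i = 1] = p_i`. -/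
noncomputable def pr {n : ℕ} (p : Fin n → ℝ) (P : (Fin n → Bool) → Prop) : ℝ :=
  ∑ x : Fin n → Bool, if P x then (∏ i, if x i then p i else 1 - p i) else 0

section Probability

variable {n : ℕ}

theorem pr_mono {q : Fin n → ℝ} (hq : ∀ i, 0 ≤ q i ∧ q i ≤ 1) {P Q : (Fin n → Bool) → Prop}
    (h : ∀ x, P x → Q x) : pr q P ≤ pr q Q := by
  classical
  refine sum_le_sum fun x _ => ?_
  have hw : 0 ≤ ∏ i, if x i then q i else 1 - q i :=
    prod_nonneg fun i _ => by split_ifs <;> linarith [hq i]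
  by_cases hP : P x
  · simp [hP, h x hP]
  · by_cases hQ : Q x <;> simp [hP, hQ, hw]

theorem pr_comp_not (q : Fin n → ℝ) (P : (Fin n → Bool) → Prop) :
    pr q (fun x => P fun i => !x i) = pr (fun i => 1 - q i) P := by
  classical
  have hnot : Function.Involutive fun (x : Fin n → Bool) i => !x i := fun x => by simp
  refine Fintype.sum_equiv hnot.toPerm _ _ fun x => ?_
  refine if_congr Iff.rfl (prod_congr rfl fun i _ => ?_) rfl
  cases hx : x i <;> simp [hx]

theorem pr_eq_mul_add_mul_update (q : Fin n → ℝ) (P : (Fin n → Bool) → Prop) (a : Fin n) :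
    pr q P = q a * pr q (fun x => P (Function.update x a true)) +
      (1 - q a) * pr q (fun x => P (Function.update x a false)) := by
  classical
  let e := Equiv.funSplitAt a Bool
  let w : {j // j ≠ a} → Bool → ℝ := fun j b => if b then q j else 1 - q j
  have hsplit (Q : (Fin n → Bool) → Prop) : pr q Q =
      ∑ b : Bool, (if b then q a else 1 - q a) *
        ∑ y, if Q (e.symm (b, y)) then ∏ j, w j (y j) else 0 := by
    rw [pr, ← e.symm.sum_comp, Fintype.sum_prod_type]
    refine sum_congr rfl fun b _ => ?_
    rw [mul_sum]
    refine sum_congr rfl fun y _ => ?_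
    rw [Fintype.prod_eq_mul_prod_subtype_ne _ a]
    have hne (j : {j // j ≠ a}) : (j : Fin n) ≠ a := j.2
    simp [e, w, hne]
  have hupd (b b' : Bool) (y : {j // j ≠ a} → Bool) :
      Function.update (e.symm (b', y)) a b = e.symm (b, y) := by
    ext j
    by_cases h : j = a <;> simp [e, h]
  rw [hsplit P, hsplit (fun x => P (Function.update x a true)),
    hsplit (fun x => P (Function.update x a false))]
  simp only [hupd, Fintype.sum_bool, if_true, Bool.false_eq_true, if_false]
  ring

noncomputable def tailPr (q : Fin n → ℝ) (S : Finset (Fin n)) (ℓ : ℕ) : ℝ :=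
  pr q fun x => ℓ ≤ #{i ∈ S | x i = true}

theorem tailPr_one_sub (q : Fin n → ℝ) (S : Finset (Fin n)) (ℓ : ℕ) :
    tailPr (fun i => 1 - q i) S ℓ = pr q fun x => ℓ ≤ #{i ∈ S | x i = false} := by
  simp [tailPr, ← pr_comp_not]

theorem tailPr_succ_le {q : Fin n → ℝ} (hq : ∀ i, 0 ≤ q i ∧ q i ≤ 1) (S : Finset (Fin n))
    (ℓ : ℕ) : tailPr q S (ℓ + 1) ≤ tailPr q S ℓ :=
  pr_mono hq fun _ => Nat.le_of_succ_le

theorem card_filter_insert_update {a : Fin n} {S : Finset (Fin n)} (ha : a ∉ S)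
    (x : Fin n → Bool) (b : Bool) :
    #{i ∈ insert a S | Function.update x a b i = true} =
      #{i ∈ S | x i = true} + if b then 1 else 0 := by
  have hS : ∀ i ∈ S, Function.update x a b i = x i := fun i hi =>
    Function.update_of_ne (ne_of_mem_of_not_mem hi ha) _ _
  rw [filter_insert, Function.update_self, filter_congr fun i hi => by rw [hS i hi]]
  cases b
  · simp
  · simp [card_insert_of_notMem, ha]

theorem tailPr_insert_succ (q : Fin n → ℝ) {a : Fin n} {S : Finset (Fin n)} (ha : a ∉ S)
    (ℓ : ℕ) :
    tailPr q (insert a S) (ℓ + 1) = q a * tailPr q S ℓ + (1 - q a) * tailPr q S (ℓ + 1) := by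
  simp only [tailPr]
  rw [pr_eq_mul_add_mul_update q _ a]
  simp only [card_filter_insert_update ha, if_true, Bool.false_eq_true, if_false, add_zero,
    Nat.add_le_add_iff_right]

theorem tailPr_le_tailPr_of_injOn {q : Fin n → ℝ} (hq : ∀ i, 0 ≤ q i ∧ q i ≤ 1)
    {f : Fin n → Fin n} {S T : Finset (Fin n)} (hf : Set.InjOn f S) (hfST : Set.MapsTo f S T)
    (hqf : ∀ i ∈ S, q i ≤ q (f i)) (ℓ : ℕ) : tailPr q S ℓ ≤ tailPr q T ℓ := by
  induction S using Finset.induction_on generalizing T ℓ with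
  | empty => exact pr_mono hq fun x hx => hx.trans (by simp)
  | insert a S ha ih =>
    cases ℓ with
    | zero => exact pr_mono hq fun _ _ => Nat.zero_le _
    | succ ℓ =>
      have hfa : f a ∈ T := hfST (mem_insert_self a S)
      have hfS : Set.MapsTo f S (T.erase (f a)) := fun i hi => mem_erase.mpr
        ⟨fun hfi => ha (hf (mem_insert_of_mem hi) (mem_insert_self a S) hfi ▸ hi),
          hfST (mem_insert_of_mem hi)⟩
      have ih' := ih (hf.mono (by simp)) hfS fun i hi => hqf i (mem_insert_of_mem hi)
      rw [← insert_erase hfa, tailPr_insert_succ q ha, tailPr_insert_succ q (notMem_erase _ _)]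
      -- raising the weight from `q a` to `q (f a)` moves mass to the larger of the two tails
      nlinarith [ih' ℓ, ih' (ℓ + 1), tailPr_succ_le hq (T.erase (f a)) ℓ, hq a, hq (f a),
        hqf a (mem_insert_self a S)]

end Probability

section Matching

variable {α : Type*} [LinearOrder α]

theorem exists_injOn_le_of_card_filter_le {A B : Finset α}
    (h : ∀ v ∈ A, #{a ∈ A | a ≤ v} ≤ #{b ∈ B | b ≤ v}) :
    ∃ f : α → α, Set.InjOn f A ∧ Set.MapsTo f A B ∧ ∀ a ∈ A, f a ≤ a := by
  classical
  let t : A → Finset α := fun a => {b ∈ B | b ≤ (a : α)}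
  obtain ⟨g, hg, hgB⟩ := (all_card_le_biUnion_card_iff_exists_injective t).mp fun s => by
    rcases s.eq_empty_or_nonempty with rfl | hs
    · simp
    obtain ⟨m, hms, hm⟩ := s.exists_max_image (fun a => (a : α)) hs
    calc #s = #(s.map (Function.Embedding.subtype _)) := (card_map _).symm
      _ ≤ #{a ∈ A | a ≤ (m : α)} := card_le_card fun a ha => by
        obtain ⟨a, has, rfl⟩ := mem_map.mp ha
        exact mem_filter.mpr ⟨a.2, hm a has⟩
      _ ≤ #(t m) := h m m.2
      _ ≤ #(s.biUnion t) := card_le_card (subset_biUnion_of_mem t hms)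
  set f : α → α := fun a => if ha : a ∈ A then g ⟨a, ha⟩ else a
  have hfg (a : α) (ha : a ∈ A) : f a = g ⟨a, ha⟩ := dif_pos ha
  refine ⟨f, fun a ha a' ha' h => ?_, fun a ha => ?_, fun a ha => ?_⟩
  · rw [hfg a ha, hfg a' ha'] at h
    exact congrArg Subtype.val (hg h)
  · exact hfg a ha ▸ (mem_filter.mp (hgB ⟨a, ha⟩)).1
  · exact hfg a ha ▸ (mem_filter.mp (hgB ⟨a, ha⟩)).2

theorem exists_injOn_ge_of_card_filter_le {A B : Finset α}
    (h : ∀ v ∈ A, #{a ∈ A | v ≤ a} ≤ #{b ∈ B | v ≤ b}) :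
    ∃ f : α → α, Set.InjOn f A ∧ Set.MapsTo f A B ∧ ∀ a ∈ A, a ≤ f a :=
  exists_injOn_le_of_card_filter_le (α := αᵒᵈ) h

end Matching

theorem stmt_8_general (n : ℕ) (p : Fin n → ℝ) (hp : ∀ i, 0 < p i ∧ p i < 1)
    (hmono : ∀ i j : Fin n, i ≤ j → p i ≤ p j)
    (V Vs : Finset (Fin n))
    (hdom : ∀ h ∈ Finset.Icc 1 n,
      (Vs.filter fun i : Fin n => (i : ℕ) < h).card ≤
        (V.filter fun i : Fin n => (i : ℕ) < h).card ∧
      (Vs.filter fun i : Fin n => n - h ≤ (i : ℕ)).card ≤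
        (V.filter fun i : Fin n => n - h ≤ (i : ℕ)).card) :
    ∀ ℓ ∈ Finset.Icc 1 Vs.card,
      (pr p (fun x => ℓ ≤ (Vs.filter fun i => x i = true).card) ≤
        pr p (fun x => ℓ ≤ (V.filter fun i => x i = true).card)) ∧
      (pr p (fun x => ℓ ≤ (Vs.filter fun i => x i = false).card) ≤
        pr p (fun x => ℓ ≤ (V.filter fun i => x i = false).card)) := by
  intro ℓ _
  have hp01 (i : Fin n) : 0 ≤ p i ∧ p i ≤ 1 := ⟨(hp i).1.le, (hp i).2.le⟩
  have hleft (v : Fin n) : #{a ∈ Vs | a ≤ v} ≤ #{b ∈ V | b ≤ v} := by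
    simpa only [Nat.lt_succ_iff, ← Fin.le_def] using (hdom (v + 1) (by simp)).1
  have hright (v : Fin n) : #{a ∈ Vs | v ≤ a} ≤ #{b ∈ V | v ≤ b} := by
    simpa only [Nat.sub_sub_self v.isLt.le, ← Fin.le_def] using
      (hdom (n - v) (by simp; omega)).2
  obtain ⟨f, hf, hfV, hfle⟩ := exists_injOn_le_of_card_filter_le fun v _ => hleft v
  obtain ⟨g, hg, hgV, hgge⟩ := exists_injOn_ge_of_card_filter_le fun v _ => hright v
  refine ⟨tailPr_le_tailPr_of_injOn hp01 hg hgV (fun i hi => hmono _ _ (hgge i hi)) ℓ, ?_⟩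
  rw [← tailPr_one_sub, ← tailPr_one_sub]
  exact tailPr_le_tailPr_of_injOn (fun i => ⟨by linarith [hp01 i], by linarith [hp01 i]⟩) hf hfV
    (fun i hi => by linarith [hmono _ _ (hfle i hi)]) ℓ

/-- Let `p ∈ (0,1)^n` with `p_1 ≤ … ≤ p_n` and `x_1,…,x_n` independent Boolean
random variables with `Pr[x_i = 1] = p_i`. Let `V, V* ⊆ [n]` with `V ⪰ V*` (i.e. `|V| ≥ |V*|`
and, for every `h ∈ [n]`, `|V ∩ [h]| ≥ |V* ∩ [h]|` and `|V ∩ [−h]| ≥ |V* ∩ [−h]|`; elements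
of `[n]` are represented by `Fin n`, `[h]` by `{i : (i:ℕ) < h}`, `[−h]` by
`{i : n − h ≤ (i:ℕ)}`). Then for every `ℓ ∈ [|V*|]`:
`Pr[Σ_{i∈V} x_i ≥ ℓ] ≥ Pr[Σ_{i∈V*} x_i ≥ ℓ]` and
`Pr[Σ_{i∈V} (1−x_i) ≥ ℓ] ≥ Pr[Σ_{i∈V*} (1−x_i) ≥ ℓ]`. -/
theorem stmt_8 (n : ℕ) (p : Fin n → ℝ) (hp : ∀ i, 0 < p i ∧ p i < 1)
    (hmono : ∀ i j : Fin n, i ≤ j → p i ≤ p j)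
    (V Vs : Finset (Fin n)) (hcard : Vs.card ≤ V.card)
    (hdom : ∀ h ∈ Finset.Icc 1 n,
      (Vs.filter fun i : Fin n => (i : ℕ) < h).card ≤
        (V.filter fun i : Fin n => (i : ℕ) < h).card ∧
      (Vs.filter fun i : Fin n => n - h ≤ (i : ℕ)).card ≤
        (V.filter fun i : Fin n => n - h ≤ (i : ℕ)).card) :
    ∀ ℓ ∈ Finset.Icc 1 Vs.card,
      (pr p (fun x => ℓ ≤ (Vs.filter fun i => x i = true).card) ≤
        pr p (fun x => ℓ ≤ (V.filter fun i => x i = true).card)) ∧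
      (pr p (fun x => ℓ ≤ (Vs.filter fun i => x i = false).card) ≤
        pr p (fun x => ℓ ≤ (V.filter fun i => x i = false).card)) :=
  stmt_8_general n p hp hmono V Vs hdom
end

section
/- Let ε > 0 with 1/ε ∈ ℕ and let n, b be positive integers. Then there exists a function A mapping each tuple of sizes (s_1,…,s_b) with s_i ≥ 1/ε and each tuple of milestone values (μ_{i,j})_{i∈[b], j∈[1/ε−1]} with μ_{i,j} ∈ [n] to a b-tuple (V_1,…,V_b) of pairwise disjoint subsets of [n] with |V_i| ≤ (1+2ε)·s_i for all i ∈ [b], such that: for every b-tuple (V*_1,…,V*_b) of pairwise disjoint subsets of [n] with |V*_i| = s_i and m(V*_i, j) = μ_{i,j} for all i ∈ [b] and j ∈ [1/ε−1], the output (V_1,…,V_b) = A((s_i), (μ_{i,j})) satisfies ∪_{i'=1}^{i} V_{i'} ⪰ ∪_{i'=1}^{i} V*_{i'} for all i ∈ [b]. -/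
/-!
Call a tuple of sets admissible if it has the sizes `s` and the milestones `μ`. Build
`∅ = X₀ ⊆ X₁ ⊆ ⋯` greedily: `Xᵢ` extends `Xᵢ₋₁` by a left-to-right scan that takes a position
exactly when the prefix count would otherwise drop below the largest prefix count of
`V₁ ∪ ⋯ ∪ Vᵢ` over admissible tuples, followed by the mirror-image right-to-left scan for
suffix counts. The output is `Aᵢ = Xᵢ \ Xᵢ₋₁`, so `A₁ ∪ ⋯ ∪ Aᵢ = Xᵢ` dominates every admissible
union by construction.

Since a scan only takes forced positions, for some cut `β` the number of new elements of `Xᵢ`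
is at most the largest count of an admissible `Vᵢ` in the first `n - β` positions plus the
largest count of an admissible `Vᵢ` in the last `β` positions. Two sets of size `s` with the
same milestones have prefix counts that differ by at most `(s + e) / e ≤ 2εs` (between
consecutive milestones lie about `εs` elements), and the prefix and suffix counts of one set
add up to `s`; hence `|Aᵢ| ≤ (1 + 2ε) sᵢ`.
-/

open Finset

/-- `V ⪰ V*`: `|V| ≥ |V*|` and for every `h ∈ [n]`, `|V ∩ [h]| ≥ |V* ∩ [h]|` and
`|V ∩ [−h]| ≥ |V* ∩ [−h]|` (elements of `[n]` represented by `Fin n`, `[h]` by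
`{i : (i:ℕ) < h}`, `[−h]` by `{i : n − h ≤ (i:ℕ)}`). -/
def Dominates {n : ℕ} (V Vs : Finset (Fin n)) : Prop :=
  Vs.card ≤ V.card ∧
  ∀ h ∈ Finset.Icc 1 n,
    (Vs.filter fun i : Fin n => (i : ℕ) < h).card ≤
      (V.filter fun i : Fin n => (i : ℕ) < h).card ∧
    (Vs.filter fun i : Fin n => n - h ≤ (i : ℕ)).card ≤
      (V.filter fun i : Fin n => n - h ≤ (i : ℕ)).card

namespace MilestoneDomination

variable {n : ℕ}

def IsCountProfile (f : ℕ → ℕ) : Prop :=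
  f 0 = 0 ∧ ∀ t, f (t + 1) ≤ f t + 1

section CountBelow

variable (σ : Equiv.Perm (Fin n))

/-- With `σ = Equiv.refl _` this is `|S ∩ [t]|`, with `σ = Fin.revPerm` it is `|S ∩ [−t]|`. -/
def countBelow (S : Finset (Fin n)) (t : ℕ) : ℕ :=
  #{v ∈ S | (σ v : ℕ) < t}

@[simp]
lemma countBelow_zero (S : Finset (Fin n)) : countBelow σ S 0 = 0 := by
  simp [countBelow]

@[simp]
lemma countBelow_empty (t : ℕ) : countBelow σ ∅ t = 0 := by
  simp [countBelow]

lemma countBelow_le_card (S : Finset (Fin n)) (t : ℕ) : countBelow σ S t ≤ #S :=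
  card_filter_le _ _

lemma countBelow_eq_card {S : Finset (Fin n)} {t : ℕ} (h : ∀ v ∈ S, (σ v : ℕ) < t) :
    countBelow σ S t = #S := by
  rw [countBelow, filter_true_of_mem h]

lemma countBelow_eq_card_of_le (S : Finset (Fin n)) {t : ℕ} (ht : n ≤ t) :
    countBelow σ S t = #S :=
  countBelow_eq_card σ fun v _ => (σ v).isLt.trans_le ht

lemma countBelow_mono (S : Finset (Fin n)) : Monotone (countBelow σ S) := fun _ _ h =>
  card_le_card (monotone_filter_right _ fun _ _ hv => hv.trans_le h)

lemma countBelow_le_of_subset {S T : Finset (Fin n)} (h : S ⊆ T) (t : ℕ) :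
    countBelow σ S t ≤ countBelow σ T t :=
  card_le_card (filter_subset_filter _ h)

lemma countBelow_union_le (S T : Finset (Fin n)) (t : ℕ) :
    countBelow σ (S ∪ T) t ≤ countBelow σ S t + countBelow σ T t := by
  rw [countBelow, filter_union]
  exact card_union_le _ _

lemma countBelow_union {S T : Finset (Fin n)} (h : Disjoint S T) (t : ℕ) :
    countBelow σ (S ∪ T) t = countBelow σ S t + countBelow σ T t := by
  rw [countBelow, filter_union, card_union_of_disjoint (disjoint_filter_filter h)]
  rfl

lemma countBelow_insert {S : Finset (Fin n)} {w : Fin n} (hw : w ∉ S) (t : ℕ) :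
    countBelow σ (insert w S) t = countBelow σ S t + if (σ w : ℕ) < t then 1 else 0 := by
  unfold countBelow
  rw [filter_insert]
  split_ifs
  · exact card_insert_of_notMem fun h => hw (mem_filter.1 h).1
  · rfl

lemma countBelow_apply_add_one (S : Finset (Fin n)) (w : Fin n) :
    countBelow σ S (σ w + 1) = countBelow σ S (σ w) + if w ∈ S then 1 else 0 := by
  have hlt : ∀ v, (σ v : ℕ) < σ w + 1 ↔ v = w ∨ (σ v : ℕ) < σ w := fun v => by
    rw [← σ.apply_eq_iff_eq, ← Fin.val_inj]
    omega
  unfold countBelow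
  simp_rw [hlt]
  rw [filter_or, filter_eq']
  split_ifs with hw
  · rw [card_union_of_disjoint (by simp), card_singleton, add_comm]
  · simp

lemma isCountProfile_countBelow (S : Finset (Fin n)) : IsCountProfile (countBelow σ S) := by
  refine ⟨countBelow_zero σ S, fun t => ?_⟩
  rcases lt_or_ge t n with ht | ht
  · obtain ⟨w, rfl⟩ : ∃ w, (σ w : ℕ) = t := ⟨σ.symm ⟨t, ht⟩, by simp⟩
    rw [countBelow_apply_add_one]
    split_ifs <;> omega
  · rw [countBelow_eq_card_of_le σ S ht, countBelow_eq_card_of_le σ S (by omega)]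
    omega

end CountBelow

lemma countBelow_refl (S : Finset (Fin n)) (t : ℕ) :
    countBelow (Equiv.refl _) S t = (S.filter fun v : Fin n => (v : ℕ) < t).card :=
  rfl

lemma countBelow_revPerm (S : Finset (Fin n)) (t : ℕ) :
    countBelow Fin.revPerm S t = (S.filter fun v : Fin n => n - t ≤ (v : ℕ)).card := by
  unfold countBelow
  congr 1
  refine filter_congr fun v _ => ?_
  simp only [Fin.revPerm_apply, Fin.val_rev]
  omega

lemma countBelow_revPerm_add_countBelow_refl (S : Finset (Fin n)) (t : ℕ) :
    countBelow Fin.revPerm S t + countBelow (Equiv.refl _) S (n - t) = #S := by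
  rw [countBelow_revPerm, countBelow_refl,
    ← card_filter_add_card_filter_not (s := S) (p := fun v : Fin n => n - t ≤ (v : ℕ))]
  congr 2
  exact filter_congr fun v _ => by omega

section TightFill

variable (σ : Equiv.Perm (Fin n)) (f : ℕ → ℕ) (X : Finset (Fin n))

/-- `P` is what the greedy scan of the first `T` positions in the order `σ` may add to `X`:
the counts of `X ∪ P` stay above `f`, and by `tight` every element of `P` was forced. -/
structure IsTightFill (P : Finset (Fin n)) (T : ℕ) : Prop where
  disjoint : Disjoint P X
  lt_of_mem : ∀ v ∈ P, (σ v : ℕ) < T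
  le_countBelow : ∀ t ≤ T, f t ≤ countBelow σ (X ∪ P) t
  tight : ∀ t, ∃ t' ≤ t, countBelow σ X t' + countBelow σ P t ≤ f t'

variable {σ f X}

lemma isTightFill_empty (hf : f 0 = 0) : IsTightFill σ f X ∅ 0 where
  disjoint := disjoint_empty_left X
  lt_of_mem := by simp
  le_countBelow t ht := by simp [Nat.le_zero.1 ht, hf]
  tight t := ⟨0, t.zero_le, by simp⟩

lemma IsTightFill.succ {P : Finset (Fin n)} {w : Fin n} (h : IsTightFill σ f X P (σ w))
    (hf : IsCountProfile f) (hw : w ∈ X ∨ f (σ w + 1) ≤ countBelow σ (X ∪ P) (σ w)) :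
    IsTightFill σ f X P (σ w + 1) where
  disjoint := h.disjoint
  lt_of_mem v hv := (h.lt_of_mem v hv).trans (Nat.lt_succ_self _)
  le_countBelow t ht := by
    rcases Nat.lt_or_eq_of_le ht with ht | rfl
    · exact h.le_countBelow t (Nat.lt_succ_iff.1 ht)
    have hprev := h.le_countBelow _ le_rfl
    rcases hw with hw | hw
    · rw [countBelow_apply_add_one, if_pos (mem_union_left P hw)]
      exact (hf.2 _).trans (Nat.add_le_add_right hprev 1)
    · exact hw.trans (countBelow_mono σ _ (Nat.le_succ _))
  tight := h.tight

lemma IsTightFill.succ_insert {P : Finset (Fin n)} {w : Fin n} (h : IsTightFill σ f X P (σ w))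
    (hf : IsCountProfile f) (hwX : w ∉ X) (hlt : countBelow σ (X ∪ P) (σ w) < f (σ w + 1)) :
    IsTightFill σ f X (insert w P) (σ w + 1) where
  disjoint := disjoint_insert_left.2 ⟨hwX, h.disjoint⟩
  lt_of_mem v hv := by
    rcases mem_insert.1 hv with rfl | hv
    · exact Nat.lt_succ_self _
    · exact (h.lt_of_mem v hv).trans (Nat.lt_succ_self _)
  le_countBelow t ht := by
    have hwP : w ∉ P := fun hw => (h.lt_of_mem w hw).false
    have hsub : X ∪ P ⊆ X ∪ insert w P := union_subset_union_right (subset_insert w P)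
    rcases Nat.lt_or_eq_of_le ht with ht | rfl
    · exact (h.le_countBelow t (Nat.lt_succ_iff.1 ht)).trans (countBelow_le_of_subset σ hsub t)
    rw [countBelow_apply_add_one, if_pos (mem_union_right X (mem_insert_self w P))]
    exact (hf.2 _).trans (Nat.add_le_add_right ((h.le_countBelow _ le_rfl).trans
      (countBelow_le_of_subset σ hsub _)) 1)
  tight t := by
    have hwP : w ∉ P := fun hw => (h.lt_of_mem w hw).false
    rw [countBelow_insert σ hwP]
    split_ifs with hwt
    · refine ⟨σ w + 1, hwt, ?_⟩
      have hXP := countBelow_union σ h.disjoint.symm (σ w)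
      rw [countBelow_eq_card σ h.lt_of_mem] at hXP
      rw [countBelow_apply_add_one, if_neg hwX,
        countBelow_eq_card σ fun v hv => (h.lt_of_mem v hv).trans hwt]
      omega
    · simpa using h.tight t

variable (σ X) in
theorem exists_isTightFill (hf : IsCountProfile f) :
    ∃ P, IsTightFill σ f X P n := by
  suffices ∀ T ≤ n, ∃ P, IsTightFill σ f X P T from this n le_rfl
  intro T hT
  induction T with
  | zero => exact ⟨∅, isTightFill_empty hf.1⟩
  | succ T ih =>
    obtain ⟨P, hP⟩ := ih (Nat.le_of_succ_le hT)
    obtain ⟨w, rfl⟩ : ∃ w, (σ w : ℕ) = T := ⟨σ.symm ⟨T, hT⟩, by simp⟩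
    by_cases hw : w ∉ X ∧ countBelow σ (X ∪ P) (σ w) < f (σ w + 1)
    · exact ⟨_, hP.succ_insert hf hw.1 hw.2⟩
    · exact ⟨P, hP.succ hf (by rwa [not_and_or, not_not, not_lt] at hw)⟩

end TightFill

theorem exists_layer_extension {f g : ℕ → ℕ} (hf : IsCountProfile f) (hg : IsCountProfile g)
    (Y : Finset (Fin n)) :
    ∃ Z, Y ⊆ Z ∧ (∀ t ≤ n, f t ≤ countBelow (Equiv.refl _) Z t) ∧
      (∀ t ≤ n, g t ≤ countBelow Fin.revPerm Z t) ∧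
      ∃ β ≤ n, ∃ t ≤ n - β,
        #(Z \ Y) + countBelow (Equiv.refl _) Y t + countBelow Fin.revPerm Y β ≤ f t + g β := by
  obtain ⟨P, hP⟩ := exists_isTightFill (Equiv.refl _) Y hf
  obtain ⟨Q, hQ⟩ := exists_isTightFill Fin.revPerm (Y ∪ P) hg
  obtain ⟨β, hβ, hQβ⟩ := hQ.tight n
  obtain ⟨t, ht, hPt⟩ := hP.tight (n - β)
  refine ⟨Y ∪ P ∪ Q, subset_union_left.trans subset_union_left,
    fun t ht => (hP.le_countBelow t ht).trans (countBelow_le_of_subset _ subset_union_left t),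
    hQ.le_countBelow, β, hβ, t, ht, ?_⟩
  have hnew : #((Y ∪ P ∪ Q) \ Y) ≤ #P + #Q := by
    rw [union_assoc, union_sdiff_left]
    exact (card_le_card sdiff_subset).trans (card_union_le P Q)
  rw [countBelow_eq_card_of_le _ Q le_rfl, countBelow_union _ hP.disjoint.symm] at hQβ
  have hsplit := countBelow_revPerm_add_countBelow_refl P β
  omega

section MaxCount

variable (σ : Equiv.Perm (Fin n)) {𝒮 : Set (Finset (Fin n))}

noncomputable def maxCount (𝒮 : Set (Finset (Fin n))) (t : ℕ) : ℕ :=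
  (Set.toFinite 𝒮).toFinset.sup (countBelow σ · t)

lemma countBelow_le_maxCount {S : Finset (Fin n)} (hS : S ∈ 𝒮) (t : ℕ) :
    countBelow σ S t ≤ maxCount σ 𝒮 t :=
  le_sup (f := (countBelow σ · t)) ((Set.Finite.mem_toFinset _).2 hS)

lemma maxCount_le {t m : ℕ} (h : ∀ S ∈ 𝒮, countBelow σ S t ≤ m) : maxCount σ 𝒮 t ≤ m :=
  Finset.sup_le fun S hS => h S ((Set.Finite.mem_toFinset _).1 hS)

@[simp]
lemma maxCount_empty (t : ℕ) : maxCount σ ∅ t = 0 :=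
  Nat.le_zero.1 (maxCount_le σ fun _ hS => hS.elim)

lemma exists_countBelow_eq_maxCount (h : 𝒮.Nonempty) (t : ℕ) :
    ∃ S ∈ 𝒮, countBelow σ S t = maxCount σ 𝒮 t := by
  obtain ⟨S, hS, heq⟩ := exists_mem_eq_sup _ ((Set.Finite.toFinset_nonempty _).2 h)
    (countBelow σ · t)
  exact ⟨S, (Set.Finite.mem_toFinset _).1 hS, heq.symm⟩

lemma maxCount_mono (𝒮 : Set (Finset (Fin n))) : Monotone (maxCount σ 𝒮) := fun _ _ h =>
  maxCount_le σ fun _ hS => (countBelow_mono σ _ h).trans (countBelow_le_maxCount σ hS _)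

lemma isCountProfile_maxCount (𝒮 : Set (Finset (Fin n))) : IsCountProfile (maxCount σ 𝒮) :=
  ⟨Nat.le_zero.1 (maxCount_le σ fun S _ => (countBelow_zero σ S).le), fun t =>
    maxCount_le σ fun _ hS => ((isCountProfile_countBelow σ _).2 t).trans
      (Nat.add_le_add_right (countBelow_le_maxCount σ hS t) 1)⟩

end MaxCount

theorem mul_countBelow_le_of_milestones {e s : ℕ} {m : ℕ → Fin n} {V W : Finset (Fin n)}
    (hV : #V = s) (hVm : ∀ j ∈ Icc 1 (e - 1), #{v ∈ V | v ≤ m j} = j * s / e)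
    (hWm : ∀ j ∈ Icc 1 (e - 1), #{v ∈ W | v ≤ m j} = j * s / e) (t : ℕ) :
    e * countBelow (Equiv.refl _) V t ≤ e * countBelow (Equiv.refl _) W t + s + e := by
  rcases Nat.eq_zero_or_pos e with rfl | he
  · simp
  -- `j + 1` is the index of the first milestone at or beyond `t`, index `e` standing for the end
  have hex : ∃ j, e ≤ j + 1 ∨ t ≤ (m (j + 1) : ℕ) := ⟨e - 1, Or.inl (by omega)⟩
  have hje : Nat.find hex + 1 ≤ e := by
    have := Nat.find_min' hex (show e ≤ e - 1 + 1 ∨ t ≤ (m (e - 1 + 1) : ℕ) from Or.inl (by omega))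
    omega
  have hspec := Nat.find_spec hex
  have hmin : ∀ k < Nat.find hex, ¬(e ≤ k + 1 ∨ t ≤ (m (k + 1) : ℕ)) := fun k =>
    Nat.find_min hex
  set j := Nat.find hex
  have hupper : countBelow (Equiv.refl _) V t ≤ (j + 1) * s / e := by
    by_cases hej : e ≤ j + 1
    · rw [show j + 1 = e by omega, Nat.mul_div_cancel_left s he, ← hV]
      exact countBelow_le_card _ V t
    · have h := hspec.resolve_left hej
      rw [← hVm (j + 1) (mem_Icc.2 ⟨by omega, by omega⟩), countBelow_refl]
      exact card_le_card (monotone_filter_right _ fun v _ hv => Fin.le_def.2 (by omega))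
  have hlower : j * s / e ≤ countBelow (Equiv.refl _) W t := by
    rcases Nat.eq_zero_or_pos j with h0 | hpos
    · simp [h0]
    have hprev := hmin (j - 1) (by omega)
    rw [not_or, not_le, Nat.sub_add_cancel hpos] at hprev
    rw [← hWm j (mem_Icc.2 ⟨hpos, by omega⟩), countBelow_refl]
    exact card_le_card (monotone_filter_right _ fun v _ hv => by
      have := Fin.le_def.1 hv; omega)
  have hdiv := Nat.div_add_mod (j * s) e
  have hmod := Nat.mod_lt (j * s) he
  calc e * countBelow (Equiv.refl _) V t ≤ e * ((j + 1) * s / e) := Nat.mul_le_mul_left e hupper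
    _ ≤ (j + 1) * s := Nat.mul_div_le _ _
    _ = j * s + s := by ring
    _ ≤ e * (j * s / e) + s + e := by omega
    _ ≤ e * countBelow (Equiv.refl _) W t + s + e := by gcongr

lemma dominates_of_countBelow_le {V W : Finset (Fin n)}
    (hpre : ∀ t ≤ n, countBelow (Equiv.refl _) W t ≤ countBelow (Equiv.refl _) V t)
    (hsuf : ∀ t ≤ n, countBelow Fin.revPerm W t ≤ countBelow Fin.revPerm V t) :
    Dominates V W := by
  refine ⟨?_, fun h hh => ⟨hpre h (mem_Icc.1 hh).2, ?_⟩⟩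
  · simpa only [countBelow_eq_card_of_le _ _ le_rfl] using hpre n le_rfl
  · simpa only [countBelow_revPerm] using hsuf h (mem_Icc.1 hh).2

lemma biUnion_Icc_one_disjointed {α : Type*} [DecidableEq α] {X : ℕ → Finset α}
    (hX : Monotone X) (h0 : X 0 = ∅) (i : ℕ) : (Icc 1 i).biUnion (disjointed X) = X i := by
  rw [← sup_eq_biUnion, ← zero_add 1, Icc_add_one_left_eq_Ioc,
    sup_Ioc_disjointed_of_monotone hX i.zero_le, h0, sdiff_empty]

section Chain

variable (b e : ℕ) (s : ℕ → ℕ) (μ : ℕ → ℕ → Fin n)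

/-- The milestone ranks are written as `j * s i / e`, which is `⌊j ε s i⌋₊` for `ε = 1 / e`. -/
def Admissible (V : ℕ → Finset (Fin n)) : Prop :=
  ∀ i ∈ Icc 1 b, #(V i) = s i ∧ ∀ j ∈ Icc 1 (e - 1), #{v ∈ V i | v ≤ μ i j} = j * s i / e

def unionFamily (i : ℕ) : Set (Finset (Fin n)) :=
  (fun V => (Icc 1 i).biUnion V) '' {V | Admissible b e s μ V}

def layerFamily (i : ℕ) : Set (Finset (Fin n)) :=
  (· i) '' {V | Admissible b e s μ V}

lemma maxCount_unionFamily_zero (σ : Equiv.Perm (Fin n)) (t : ℕ) :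
    maxCount σ (unionFamily b e s μ 0) t = 0 :=
  Nat.le_zero.1 <| maxCount_le σ <| by rintro _ ⟨V, -, rfl⟩; simp

lemma maxCount_unionFamily_add_one_le (σ : Equiv.Perm (Fin n)) (i t : ℕ) :
    maxCount σ (unionFamily b e s μ (i + 1)) t ≤
      maxCount σ (layerFamily b e s μ (i + 1)) t + maxCount σ (unionFamily b e s μ i) t :=
  maxCount_le σ <| by
    rintro _ ⟨V, hV, rfl⟩
    dsimp only
    rw [← insert_Icc_right_eq_Icc_add_one (Nat.le_add_left 1 i), biUnion_insert]
    exact (countBelow_union_le σ _ _ t).trans (add_le_add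
      (countBelow_le_maxCount σ (𝒮 := layerFamily b e s μ (i + 1)) ⟨V, hV, rfl⟩ t)
      (countBelow_le_maxCount σ (𝒮 := unionFamily b e s μ i) ⟨V, hV, rfl⟩ t))

noncomputable def chain : ℕ → Finset (Fin n)
  | 0 => ∅
  | i + 1 => (exists_layer_extension
      (isCountProfile_maxCount (Equiv.refl _) (unionFamily b e s μ (i + 1)))
      (isCountProfile_maxCount Fin.revPerm (unionFamily b e s μ (i + 1))) (chain i)).choose

lemma chain_add_one_spec (i : ℕ) :
    chain b e s μ i ⊆ chain b e s μ (i + 1) ∧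
      (∀ t ≤ n, maxCount (Equiv.refl _) (unionFamily b e s μ (i + 1)) t ≤
        countBelow (Equiv.refl _) (chain b e s μ (i + 1)) t) ∧
      (∀ t ≤ n, maxCount Fin.revPerm (unionFamily b e s μ (i + 1)) t ≤
        countBelow Fin.revPerm (chain b e s μ (i + 1)) t) ∧
      ∃ β ≤ n, ∃ t ≤ n - β,
        #(chain b e s μ (i + 1) \ chain b e s μ i) +
            countBelow (Equiv.refl _) (chain b e s μ i) t +
            countBelow Fin.revPerm (chain b e s μ i) β ≤
          maxCount (Equiv.refl _) (unionFamily b e s μ (i + 1)) t +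
            maxCount Fin.revPerm (unionFamily b e s μ (i + 1)) β :=
  (exists_layer_extension (isCountProfile_maxCount (Equiv.refl _) _)
    (isCountProfile_maxCount Fin.revPerm _) _).choose_spec

lemma monotone_chain : Monotone (chain b e s μ) :=
  monotone_nat_of_le_succ fun i => (chain_add_one_spec b e s μ i).1

lemma maxCount_unionFamily_le_countBelow_chain (i : ℕ) {t : ℕ} (ht : t ≤ n) :
    maxCount (Equiv.refl _) (unionFamily b e s μ i) t ≤
        countBelow (Equiv.refl _) (chain b e s μ i) t ∧
      maxCount Fin.revPerm (unionFamily b e s μ i) t ≤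
        countBelow Fin.revPerm (chain b e s μ i) t := by
  cases i with
  | zero => simp [maxCount_unionFamily_zero]
  | succ i =>
    obtain ⟨-, hpre, hsuf, -⟩ := chain_add_one_spec b e s μ i
    exact ⟨hpre t ht, hsuf t ht⟩

lemma exists_card_chain_sdiff_le (i : ℕ) :
    ∃ β, #(chain b e s μ (i + 1) \ chain b e s μ i) ≤
      maxCount (Equiv.refl _) (layerFamily b e s μ (i + 1)) (n - β) +
        maxCount Fin.revPerm (layerFamily b e s μ (i + 1)) β := by
  obtain ⟨-, -, -, β, hβ, t, ht, hcard⟩ := chain_add_one_spec b e s μ i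
  refine ⟨β, ?_⟩
  have hpre := maxCount_unionFamily_add_one_le b e s μ (Equiv.refl _) i t
  have hsuf := maxCount_unionFamily_add_one_le b e s μ Fin.revPerm i β
  have hchain_pre :=
    (maxCount_unionFamily_le_countBelow_chain b e s μ i (ht.trans (n.sub_le β))).1
  have hchain_suf := (maxCount_unionFamily_le_countBelow_chain b e s μ i hβ).2
  have hmono := maxCount_mono (Equiv.refl _) (layerFamily b e s μ (i + 1)) ht
  omega

theorem mul_maxCount_layerFamily_add_le {i : ℕ} (hi : i ∈ Icc 1 b) (hes : e ≤ s i) (β : ℕ) :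
    e * (maxCount (Equiv.refl _) (layerFamily b e s μ i) (n - β) +
      maxCount Fin.revPerm (layerFamily b e s μ i) β) ≤ (e + 2) * s i := by
  rcases Set.eq_empty_or_nonempty {V | Admissible b e s μ V} with h | ⟨V₀, hV₀⟩
  · simp [layerFamily, h]
  have hne : (layerFamily b e s μ i).Nonempty := ⟨_, V₀, hV₀, rfl⟩
  obtain ⟨_, ⟨V, hV, rfl⟩, hVmax⟩ := exists_countBelow_eq_maxCount (Equiv.refl _) hne (n - β)
  obtain ⟨_, ⟨W, hW, rfl⟩, hWmax⟩ := exists_countBelow_eq_maxCount Fin.revPerm hne β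
  rw [← hVmax, ← hWmax]
  have hgap := mul_countBelow_le_of_milestones (hV i hi).1 (hV i hi).2 (hW i hi).2 (n - β)
  have hcompl := countBelow_revPerm_add_countBelow_refl (W i) β
  rw [(hW i hi).1] at hcompl
  nlinarith

lemma mul_card_disjointed_chain_le {i : ℕ} (hi : i ∈ Icc 1 b) (hes : e ≤ s i) :
    e * #(disjointed (chain b e s μ) i) ≤ (e + 2) * s i := by
  obtain ⟨i, rfl⟩ : ∃ k, i = k + 1 := ⟨i - 1, by grind⟩
  obtain ⟨β, hcard⟩ := exists_card_chain_sdiff_le b e s μ i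
  rw [(monotone_chain b e s μ).disjointed_add_one]
  exact (Nat.mul_le_mul_left e hcard).trans (mul_maxCount_layerFamily_add_le b e s μ hi hes β)

lemma dominates_chain {V : ℕ → Finset (Fin n)} (hV : Admissible b e s μ V) (i : ℕ) :
    Dominates (chain b e s μ i) ((Icc 1 i).biUnion V) := by
  have hmem : (Icc 1 i).biUnion V ∈ unionFamily b e s μ i := ⟨V, hV, rfl⟩
  exact dominates_of_countBelow_le
    (fun t ht => (countBelow_le_maxCount _ hmem t).trans
      (maxCount_unionFamily_le_countBelow_chain b e s μ i ht).1)
    (fun t ht => (countBelow_le_maxCount _ hmem t).trans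
      (maxCount_unionFamily_le_countBelow_chain b e s μ i ht).2)

end Chain

end MilestoneDomination

open MilestoneDomination in
theorem stmt_12_general (ε : ℝ) (hε : 0 < ε) (e : ℕ) (he : (e : ℝ) = 1 / ε)
    (n b : ℕ) :
    ∃ A : (ℕ → ℕ) → (ℕ → ℕ → Fin n) → (ℕ → Finset (Fin n)),
      ∀ (s : ℕ → ℕ) (μ : ℕ → ℕ → Fin n),
        (∀ i ∈ Finset.Icc 1 b, e ≤ s i) →
        ((∀ i ∈ Finset.Icc 1 b, ∀ i' ∈ Finset.Icc 1 b, i ≠ i' →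
            Disjoint (A s μ i) (A s μ i')) ∧
         (∀ i ∈ Finset.Icc 1 b, ((A s μ i).card : ℝ) ≤ (1 + 2 * ε) * (s i : ℝ)) ∧
         (∀ Vs : ℕ → Finset (Fin n),
            (∀ i ∈ Finset.Icc 1 b, ∀ i' ∈ Finset.Icc 1 b, i ≠ i' →
              Disjoint (Vs i) (Vs i')) →
            (∀ i ∈ Finset.Icc 1 b, (Vs i).card = s i) →
            (∀ i ∈ Finset.Icc 1 b, ∀ j ∈ Finset.Icc 1 (e - 1),
              μ i j ∈ Vs i ∧
                ((Vs i).filter fun v => v ≤ μ i j).card = ⌊(j : ℝ) * ε * (s i : ℝ)⌋₊) →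
            ∀ i ∈ Finset.Icc 1 b,
              Dominates ((Finset.Icc 1 i).biUnion (A s μ))
                ((Finset.Icc 1 i).biUnion Vs))) := by
  have hεe : ε = 1 / e := by rw [he, one_div_one_div]
  have he0 : (0 : ℝ) < e := by rw [he]; positivity
  have hfloor : ∀ j m : ℕ, ⌊(j : ℝ) * ε * m⌋₊ = j * m / e := fun j m => by
    rw [hεe, show (j : ℝ) * (1 / e) * m = ((j * m : ℕ) : ℝ) / e by push_cast; ring,
      Nat.floor_div_natCast, Nat.floor_natCast]
  refine ⟨fun s μ => disjointed (chain b e s μ), fun s μ hs => ⟨fun i _ i' _ hii' =>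
    disjoint_disjointed _ hii', fun i hi => ?_, fun Vs _ hsize hmil i _ => ?_⟩⟩
  · have hmul : (#(disjointed (chain b e s μ) i) : ℝ) * e ≤ (e + 2) * s i := by
      rw [mul_comm]
      exact_mod_cast mul_card_disjointed_chain_le b e s μ hi (hs i hi)
    calc (#(disjointed (chain b e s μ) i) : ℝ) ≤ (e + 2) * s i / e := (le_div_iff₀ he0).2 hmul
      _ = (1 + 2 * ε) * s i := by rw [hεe]; field_simp
  · rw [biUnion_Icc_one_disjointed (monotone_chain b e s μ) rfl]
    exact dominates_chain b e s μ
      (fun i hi => ⟨hsize i hi, fun j hj => hfloor j (s i) ▸ (hmil i hi j hj).2⟩) i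

/-- Let `ε > 0` with `1/ε = e ∈ ℕ` and let `n, b` be positive integers. There
is a function `A` mapping each tuple of sizes `(s_1,…,s_b)` with `s_i ≥ 1/ε` and each tuple
of milestone values `(μ_{i,j})_{i∈[b], j∈[1/ε−1]}` to a `b`-tuple `(V_1,…,V_b)` of pairwise
disjoint subsets of `[n]` with `|V_i| ≤ (1+2ε)·s_i`, such that whenever `(V*_1,…,V*_b)` are
pairwise disjoint subsets of `[n]` with `|V*_i| = s_i` whose milestones are exactly the
`μ_{i,j}` (the `j`-th milestone of `V*` being its `⌊jε|V*|⌋`-th smallest element), the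
output satisfies `∪_{i'≤i} V_{i'} ⪰ ∪_{i'≤i} V*_{i'}` for every `i ∈ [b]`. -/
theorem stmt_12 (ε : ℝ) (hε : 0 < ε) (e : ℕ) (he : (e : ℝ) = 1 / ε)
    (n b : ℕ) (hn : 0 < n) (hb : 0 < b) :
    ∃ A : (ℕ → ℕ) → (ℕ → ℕ → Fin n) → (ℕ → Finset (Fin n)),
      ∀ (s : ℕ → ℕ) (μ : ℕ → ℕ → Fin n),
        (∀ i ∈ Finset.Icc 1 b, e ≤ s i) →
        ((∀ i ∈ Finset.Icc 1 b, ∀ i' ∈ Finset.Icc 1 b, i ≠ i' →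
            Disjoint (A s μ i) (A s μ i')) ∧
         (∀ i ∈ Finset.Icc 1 b, ((A s μ i).card : ℝ) ≤ (1 + 2 * ε) * (s i : ℝ)) ∧
         (∀ Vs : ℕ → Finset (Fin n),
            (∀ i ∈ Finset.Icc 1 b, ∀ i' ∈ Finset.Icc 1 b, i ≠ i' →
              Disjoint (Vs i) (Vs i')) →
            (∀ i ∈ Finset.Icc 1 b, (Vs i).card = s i) →
            (∀ i ∈ Finset.Icc 1 b, ∀ j ∈ Finset.Icc 1 (e - 1),
              μ i j ∈ Vs i ∧
                ((Vs i).filter fun v => v ≤ μ i j).card = ⌊(j : ℝ) * ε * (s i : ℝ)⌋₊) →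
            ∀ i ∈ Finset.Icc 1 b,
              Dominates ((Finset.Icc 1 i).biUnion (A s μ))
                ((Finset.Icc 1 i).biUnion Vs))) :=
  stmt_12_general ε hε e he n b
end

section
/- Let ε > 0 with 1/ε ∈ ℕ, let n be a positive integer, and let Z be a random variable taking values in {1,…,n}. For ℓ ∈ {0,…,1/ε−1} and j ∈ ℕ_0 put a_j(ℓ) = 2^{j/ε + ℓ}. Then there exists ℓ ∈ {0,…,1/ε−1} such that Σ_{j∈ℕ_0} a_j(ℓ)·Pr[(1+ε)·Z ≥ a_j(ℓ)] ≤ 2ε(1+ε)·E[Z]. -/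
/-!
Put `f k = 2^k · Pr[2^k ≤ (1+ε)Z]`. Pointwise, the powers of two below `x ≥ 0` sum to at most
`2x`, so `∑ₖ f k ≤ 2(1+ε)·E[Z]`. Splitting `k` by its residue `ℓ` mod `e = 1/ε` writes this
sum as `∑_{ℓ<e} ∑ⱼ f (j e + ℓ)`, and the smallest of these `e` inner sums is at most the
average `2ε(1+ε)·E[Z]`.
-/

open MeasureTheory Finset

lemma sum_filter_two_pow_le {x : ℝ} (hx : 0 ≤ x) (s : Finset ℕ) :
    ∑ k ∈ s with (2 : ℝ) ^ k ≤ x, (2 : ℝ) ^ k ≤ 2 * x := by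
  set T := {k ∈ s | (2 : ℝ) ^ k ≤ x}
  rcases T.eq_empty_or_nonempty with hT | hT
  · simp only [T, hT, sum_empty]
    linarith
  have hmax : (2 : ℝ) ^ T.max' hT ≤ x := (mem_filter.mp (T.max'_mem hT)).2
  calc ∑ k ∈ T, (2 : ℝ) ^ k ≤ ∑ k ∈ range (T.max' hT + 1), (2 : ℝ) ^ k :=
        sum_le_sum_of_subset_of_nonneg
          (fun k hk => mem_range_succ_iff.mpr (T.le_max' k hk)) (fun _ _ _ => by positivity)
    _ = 2 * 2 ^ T.max' hT - 1 := by rw [geom_sum_eq (by norm_num)]; ring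
    _ ≤ 2 * x := by linarith

section

variable {Ω : Type*} [MeasurableSpace Ω] {μ : Measure Ω} [IsFiniteMeasure μ] {X : Ω → ℝ}

lemma sum_two_pow_mul_measureReal_le (hX : Integrable X μ) (hX0 : 0 ≤ᵐ[μ] X) (s : Finset ℕ) :
    ∑ k ∈ s, (2 : ℝ) ^ k * μ.real {ω | (2 : ℝ) ^ k ≤ X ω} ≤ 2 * ∫ ω, X ω ∂μ := by
  have hmeas (k : ℕ) : NullMeasurableSet {ω | (2 : ℝ) ^ k ≤ X ω} μ :=
    nullMeasurableSet_le aemeasurable_const hX.aemeasurable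
  have hterm (k : ℕ) : (2 : ℝ) ^ k * μ.real {ω | (2 : ℝ) ^ k ≤ X ω} =
      ∫ ω, {ω | (2 : ℝ) ^ k ≤ X ω}.indicator (fun _ => (2 : ℝ) ^ k) ω ∂μ := by
    rw [integral_indicator₀ (hmeas k), setIntegral_const, smul_eq_mul, mul_comm]
  simp only [hterm]
  rw [← integral_finsetSum _ fun k _ => (integrable_const _).indicator₀ (hmeas k),
    ← integral_const_mul]
  refine integral_mono_ae (integrable_finsetSum _ fun k _ =>
    (integrable_const _).indicator₀ (hmeas k)) (hX.const_mul 2) ?_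
  filter_upwards [hX0] with ω hω
  simpa only [sum_indicator_eq_sum_filter, Set.indicator_apply, Set.mem_ofPred_eq,
    sum_ite, sum_const_zero, add_zero] using sum_filter_two_pow_le hω s

lemma summable_two_pow_mul_measureReal (hX : Integrable X μ) (hX0 : 0 ≤ᵐ[μ] X) :
    Summable fun k : ℕ => (2 : ℝ) ^ k * μ.real {ω | (2 : ℝ) ^ k ≤ X ω} :=
  summable_of_sum_le (fun _ => by positivity) (sum_two_pow_mul_measureReal_le hX hX0)

lemma tsum_two_pow_mul_measureReal_le (hX : Integrable X μ) (hX0 : 0 ≤ᵐ[μ] X) :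
    ∑' k : ℕ, (2 : ℝ) ^ k * μ.real {ω | (2 : ℝ) ^ k ≤ X ω} ≤ 2 * ∫ ω, X ω ∂μ :=
  Real.tsum_le_of_sum_le (fun _ => by positivity) (sum_two_pow_mul_measureReal_le hX hX0)

end

lemma exists_tsum_residueClass_le {f : ℕ → ℝ} (hf : Summable f) {e : ℕ} (he : e ≠ 0) :
    ∃ ℓ < e, ∑' j : ℕ, f (j * e + ℓ) ≤ (∑' k, f k) / e := by
  have : NeZero e := ⟨he⟩
  have hsplit : ∑ ℓ : ZMod e, ∑' j : ℕ, f (j * e + ℓ.val) ≤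
      ∑ _ℓ : ZMod e, (∑' k, f k) / e := by
    rw [sum_const, card_univ, ZMod.card, nsmul_eq_mul, mul_div_cancel₀ _ (by exact_mod_cast he),
      Nat.sumByResidueClasses hf e]
    simp only [add_comm, mul_comm, le_refl]
  obtain ⟨ℓ, -, hℓ⟩ := exists_le_of_sum_le univ_nonempty hsplit
  exact ⟨ℓ.val, ZMod.val_lt ℓ, hℓ⟩

theorem stmt_14_general {Ω : Type*} [MeasurableSpace Ω] (μ : Measure Ω) [IsProbabilityMeasure μ]
    (ε : ℝ) (hε : 0 < ε) (e : ℕ) (he : (e : ℝ) = 1 / ε)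
    (n : ℕ) (Z : Ω → ℕ) (hmeas : Measurable Z)
    (hZ : ∀ ω, Z ω ∈ Finset.Icc 1 n) :
    ∃ ℓ < e,
      ∑' j : ℕ, (2 : ℝ) ^ (j * e + ℓ) *
          (μ {ω | (2 : ℝ) ^ (j * e + ℓ) ≤ (1 + ε) * (Z ω : ℝ)}).toReal ≤
        2 * ε * (1 + ε) * ∫ ω, (Z ω : ℝ) ∂μ := by
  have he0 : e ≠ 0 := by
    rintro rfl
    simp only [Nat.cast_zero, one_div, zero_eq_inv] at he
    exact hε.ne' he.symm
  have hZint : Integrable (fun ω => (Z ω : ℝ)) μ :=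
    .of_bound (measurable_from_top.comp hmeas).aestronglyMeasurable n
      (.of_forall fun ω => by simpa using (mem_Icc.mp (hZ ω)).2)
  have hX : Integrable (fun ω => (1 + ε) * (Z ω : ℝ)) μ := hZint.const_mul _
  have hX0 : 0 ≤ᵐ[μ] fun ω => (1 + ε) * (Z ω : ℝ) := .of_forall fun ω => by positivity
  obtain ⟨ℓ, hℓ, hsum⟩ :=
    exists_tsum_residueClass_le (summable_two_pow_mul_measureReal hX hX0) he0
  refine ⟨ℓ, hℓ, hsum.trans ?_⟩
  rw [div_le_iff₀ (by positivity)]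
  calc _ ≤ 2 * ∫ ω, (1 + ε) * (Z ω : ℝ) ∂μ := tsum_two_pow_mul_measureReal_le hX hX0
    _ = 2 * ε * (1 + ε) * (∫ ω, (Z ω : ℝ) ∂μ) * e := by
      rw [integral_const_mul, he]
      field_simp

/-- Let `ε > 0` with `1/ε = e ∈ ℕ`, let `n ≥ 1`, and let `Z` be a random
variable with values in `{1,…,n}`. For `ℓ ∈ {0,…,1/ε−1}` and `j ∈ ℕ₀` put
`a_j(ℓ) = 2^{j/ε + ℓ} = 2^{j·e + ℓ}`. Then there is `ℓ ∈ {0,…,1/ε−1}` with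
`Σ_{j∈ℕ₀} a_j(ℓ)·Pr[(1+ε)·Z ≥ a_j(ℓ)] ≤ 2ε(1+ε)·E[Z]`. -/
theorem stmt_14 {Ω : Type*} [MeasurableSpace Ω] (μ : Measure Ω) [IsProbabilityMeasure μ]
    (ε : ℝ) (hε : 0 < ε) (e : ℕ) (he : (e : ℝ) = 1 / ε)
    (n : ℕ) (hn : 0 < n) (Z : Ω → ℕ) (hmeas : Measurable Z)
    (hZ : ∀ ω, Z ω ∈ Finset.Icc 1 n) :
    ∃ ℓ < e,
      ∑' j : ℕ, (2 : ℝ) ^ (j * e + ℓ) *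
          (μ {ω | (2 : ℝ) ^ (j * e + ℓ) ≤ (1 + ε) * (Z ω : ℝ)}).toReal ≤
        2 * ε * (1 + ε) * ∫ ω, (Z ω : ℝ) ∂μ :=
  stmt_14_general μ ε hε e he n Z hmeas hZ
end
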